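/- arXiv:2304.11897 — 2 statements merged into one kernel-verified Lean document; each statement's English description precedes it below -/
import Mathlib

section
/- Let E be a bilinear form on a real vector space F with E(u,u) ≥ 0 for all u ∈ F. For any finite sequence v₁, …, v_N in F and any u ∈ F, the Cesàro mean V := (1/N)∑ₖ vₖ satisfies E(V, u − V) = (1/N)∑ₖ E(vₖ, u − vₖ) + (1/N²)∑_{k<j} E(vₖ − v_j, vₖ − v_j). In particular, if E(vₖ, u − vₖ) ≥ 0 for every k, then E(V, u − V) ≥ 0. -/
lemma keysum (N : ℕ) (a : ℕ → ℕ → ℝ) :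
    ∑ j ∈ Finset.range N, ∑ k ∈ Finset.range j, (a k k - a k j - a j k + a j j)
      = N * ∑ k ∈ Finset.range N, a k k
        - ∑ j ∈ Finset.range N, ∑ k ∈ Finset.range N, a k j := by
  induction N with
  | zero => simp
  | succ n ih =>
    rw [Finset.sum_range_succ, ih]
    simp only [Finset.sum_range_succ, Finset.sum_add_distrib, Finset.sum_sub_distrib,
      Finset.sum_const, Finset.card_range, nsmul_eq_mul]
    push_cast
    ring

/-- Cesàro-mean identity for a bilinear form nonnegative on the diagonal:
`E(V, u − V) = (1/N)∑ₖ E(vₖ, u − vₖ) + (1/N²)∑_{k<j} E(vₖ − v_j, vₖ − v_j)`,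
so if each `E(vₖ, u − vₖ) ≥ 0` then `E(V, u − V) ≥ 0`. -/
theorem stmt2 {F : Type*} [AddCommGroup F] [Module ℝ F]
    (E : F →ₗ[ℝ] F →ₗ[ℝ] ℝ) (hpos : ∀ u, 0 ≤ E u u)
    (N : ℕ) (hN : 0 < N) (v : ℕ → F) (u : F)
    (V : F) (hV : V = (N : ℝ)⁻¹ • ∑ k ∈ Finset.range N, v k) :
    E V (u - V) = (N : ℝ)⁻¹ * ∑ k ∈ Finset.range N, E (v k) (u - v k)
        + ((N : ℝ) ^ 2)⁻¹ *
            ∑ j ∈ Finset.range N, ∑ k ∈ Finset.range j, E (v k - v j) (v k - v j)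
      ∧ ((∀ k < N, 0 ≤ E (v k) (u - v k)) → 0 ≤ E V (u - V)) := by
  have hne : (N : ℝ) ≠ 0 := Nat.cast_ne_zero.mpr hN.ne'
  set a : ℕ → ℕ → ℝ := fun k j => E (v k) (v j) with ha
  set b : ℕ → ℝ := fun k => E (v k) u with hb
  have hEV : ∀ w, E V w = (N : ℝ)⁻¹ * ∑ k ∈ Finset.range N, E (v k) w := by
    intro w
    rw [hV, map_smul, LinearMap.smul_apply, smul_eq_mul, map_sum, LinearMap.sum_apply]
  have hWV : ∀ k, E (v k) V = (N : ℝ)⁻¹ * ∑ j ∈ Finset.range N, a k j := by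
    intro k
    rw [hV, map_smul, smul_eq_mul, map_sum]
  have hL : E V (u - V)
      = (N : ℝ)⁻¹ * ∑ k ∈ Finset.range N, b k
        - ((N : ℝ) ^ 2)⁻¹ * ∑ k ∈ Finset.range N, ∑ j ∈ Finset.range N, a k j := by
    rw [hEV]
    have : ∀ k, E (v k) (u - V) = b k - (N : ℝ)⁻¹ * ∑ j ∈ Finset.range N, a k j := by
      intro k; rw [map_sub, hWV]
    rw [Finset.sum_congr rfl fun k _ => this k, Finset.sum_sub_distrib, ← Finset.mul_sum]
    ring
  have h1 : ∀ k, E (v k) (u - v k) = b k - a k k := by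
    intro k; rw [map_sub]
  have h2 : ∀ k j, E (v k - v j) (v k - v j) = a k k - a k j - a j k + a j j := by
    intro k j
    simp only [map_sub, LinearMap.sub_apply, ha]
    ring
  have hmain : E V (u - V) = (N : ℝ)⁻¹ * ∑ k ∈ Finset.range N, E (v k) (u - v k)
      + ((N : ℝ) ^ 2)⁻¹ *
          ∑ j ∈ Finset.range N, ∑ k ∈ Finset.range j, E (v k - v j) (v k - v j) := by
    rw [hL, Finset.sum_congr rfl fun k _ => h1 k,
      Finset.sum_congr rfl fun j _ => Finset.sum_congr rfl fun k _ => h2 k j, keysum,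
      Finset.sum_sub_distrib]
    have hcomm : ∑ k ∈ Finset.range N, ∑ j ∈ Finset.range N, a k j
        = ∑ j ∈ Finset.range N, ∑ k ∈ Finset.range N, a k j := Finset.sum_comm
    rw [hcomm]
    field_simp
    ring
  refine ⟨hmain, fun hk => ?_⟩
  rw [hmain]
  have t1 : 0 ≤ (N : ℝ)⁻¹ * ∑ k ∈ Finset.range N, E (v k) (u - v k) :=
    mul_nonneg (by positivity) (Finset.sum_nonneg fun k hkk => hk k (Finset.mem_range.mp hkk))
  have t2 : 0 ≤ ((N : ℝ) ^ 2)⁻¹ *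
      ∑ j ∈ Finset.range N, ∑ k ∈ Finset.range j, E (v k - v j) (v k - v j) :=
    mul_nonneg (by positivity)
      (Finset.sum_nonneg fun j _ => Finset.sum_nonneg fun k _ => hpos _)
  linarith
end

section
/- Suppose for a measurable function v and a Markov process X with discount α > 0 it holds that E_x[e^{−ασ} v(X_σ)] ≤ v(x) ≤ E_x[e^{−ατ} v(X_τ)] for all stopping times σ ≤ τ̂ and τ ≤ σ̂ (where τ̂, σ̂ are fixed stopping times), and that g ≤ v ≤ h with v = h on {X_{τ̂}} at time τ̂ (i.e., v(X_{τ̂}) = h(X_{τ̂}) on {τ̂ < ∞}). Then for any stopping time σ, J_x(τ̂, σ) := E_x[e^{−ατ̂} h(X_{τ̂}) 1_{τ̂≤σ} + e^{−ασ} g(X_σ) 1_{τ̂>σ}] ≤ E_x[e^{−α(τ̂∧σ)} v(X_{τ̂∧σ})] ≤ v(x). -/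
open MeasureTheory
open scoped NNReal

/-- From the two-sided bound (3.10) the saddle-point inequality follows: if
`v = h` at time `τ̂`, `g ≤ v ≤ h`, and `E_x[e^{−αρ} v(X_ρ)] ≤ v(x)` for all
stopping times `ρ ≤ τ̂`, then for any stopping time `σ`,
`J_x(τ̂,σ) ≤ E_x[e^{−α(τ̂∧σ)} v(X_{τ̂∧σ})] ≤ v(x)`. -/
theorem stmt18 {Ω S : Type*} [MeasurableSpace Ω]
    (ℙ : Measure Ω) [IsProbabilityMeasure ℙ]
    (X : ℝ≥0 → Ω → S) (α : ℝ) (hα : 0 < α)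
    (v g h : S → ℝ) (vx : ℝ)
    (τhat σ : Ω → ℝ≥0)
    (hgv : ∀ y, g y ≤ v y) (hvh : ∀ y, v y ≤ h y)
    (hmatch : ∀ ω, v (X (τhat ω) ω) = h (X (τhat ω) ω))
    (hupper : ∀ ρ : Ω → ℝ≥0, (∀ ω, ρ ω ≤ τhat ω) →
      ∫ ω, Real.exp (-α * (ρ ω).toReal) * v (X (ρ ω) ω) ∂ℙ ≤ vx)
    (hint1 : Integrable (fun ω => Real.exp (-α * (min (τhat ω) (σ ω)).toReal) *
      (if τhat ω ≤ σ ω then h (X (τhat ω) ω) else g (X (σ ω) ω))) ℙ)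
    (hint2 : Integrable (fun ω => Real.exp (-α * (min (τhat ω) (σ ω)).toReal) *
      v (X (min (τhat ω) (σ ω)) ω)) ℙ) :
    (∫ ω, Real.exp (-α * (min (τhat ω) (σ ω)).toReal) *
        (if τhat ω ≤ σ ω then h (X (τhat ω) ω) else g (X (σ ω) ω)) ∂ℙ)
        ≤ ∫ ω, Real.exp (-α * (min (τhat ω) (σ ω)).toReal) *
            v (X (min (τhat ω) (σ ω)) ω) ∂ℙ
      ∧ (∫ ω, Real.exp (-α * (min (τhat ω) (σ ω)).toReal) *
            v (X (min (τhat ω) (σ ω)) ω) ∂ℙ) ≤ vx := by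
  constructor
  · apply integral_mono hint1 hint2
    intro ω
    by_cases hc : τhat ω ≤ σ ω
    · simp only [hc, if_true, min_eq_left hc]
      rw [hmatch ω]
    · simp only [hc, if_false, min_eq_right (le_of_not_ge hc)]
      exact mul_le_mul_of_nonneg_left (hgv _) (Real.exp_nonneg _)
  · exact hupper (fun ω => min (τhat ω) (σ ω)) (fun ω => min_le_left _ _)
end
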